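/- arXiv:2102.07648 — 6 statements merged into one kernel-verified Lean document; each statement's English description precedes it below -/
import Mathlib

section
/- For all real numbers s with 0 < s < 1 and exponents ψ ∈ (0,1), ζ = ψ/(2-ψ), one has -s + s^ζ - (1 - s²)^(ψ/2) < 0. -/
/-! Write `s = s ^ ζ * s ^ (1 - ζ)`. Since `s ^ (1 - ζ) ≥ s ^ 2`, we get
`s ^ ζ - s ≤ s ^ ζ * (1 - s ^ 2) < 1 - s ^ 2 ≤ (1 - s ^ 2) ^ (ψ / 2)`. -/

namespace Real

lemma rpow_mul_sq_le_self {s ζ : ℝ} (hs : 0 < s) (hs1 : s ≤ 1) (hζ : -1 ≤ ζ) :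
    s ^ ζ * s ^ 2 ≤ s := by
  calc s ^ ζ * s ^ 2 = s ^ (ζ + 2) := by rw [rpow_add hs, rpow_two]
    _ ≤ s ^ (1 : ℝ) := rpow_le_rpow_of_exponent_ge hs hs1 (by linarith)
    _ = s := rpow_one s

lemma rpow_sub_self_lt_one_sub_sq_rpow {s ζ p : ℝ} (hs : 0 < s) (hs1 : s < 1) (hζ : 0 < ζ)
    (hp : p ≤ 1) : s ^ ζ - s < (1 - s ^ 2) ^ p := by
  have hsq : 0 < 1 - s ^ 2 := by nlinarith
  have hsζ : s ^ ζ < 1 := rpow_lt_one hs.le hs1 hζ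
  have hsplit : s ^ ζ * s ^ 2 ≤ s := rpow_mul_sq_le_self hs hs1.le (by linarith)
  calc s ^ ζ - s ≤ s ^ ζ * (1 - s ^ 2) := by linarith
    _ < 1 - s ^ 2 := mul_lt_of_lt_one_left hsq hsζ
    _ ≤ (1 - s ^ 2) ^ p := self_le_rpow_of_le_one hsq.le (by nlinarith) hp

end Real

theorem stmt0 (s ψ ζ : ℝ) (hs : 0 < s) (hs1 : s < 1)
    (hψ : 0 < ψ) (hψ1 : ψ < 1) (hζ : ζ = ψ / (2 - ψ)) :
    -s + s ^ ζ - (1 - s ^ 2) ^ (ψ / 2) < 0 := by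
  have hζ0 : 0 < ζ := hζ ▸ div_pos hψ (by linarith)
  linarith [Real.rpow_sub_self_lt_one_sub_sq_rpow hs hs1 hζ0 (p := ψ / 2) (by linarith)]
end

section
/- Let ψ ∈ (0,1) and ζ = ψ/(2-ψ). Then for all σ ∈ (0,1), σ^(2/ψ) · (1 - σ^(1/ζ - 1))^(2/ψ) < (1 + σ^(1/ζ)) · (1 - σ^(1/ζ)). -/
/-! With `p = 1/ζ = 2/ψ - 1 > 1` and `t = σ^p < σ`, the left side is `(σ - t)^(p+1)`, which is
below `σ - t` because `0 < σ - t < 1`; and `σ - t < 1 - t^2` since `t^2 < t` and `σ < 1`. -/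

open Real

lemma rpow_mul_one_sub_rpow_sub_one {σ p : ℝ} (hσ : 0 < σ) (hσp : σ ^ (p - 1) ≤ 1) (q : ℝ) :
    σ ^ q * (1 - σ ^ (p - 1)) ^ q = (σ - σ ^ p) ^ q := by
  rw [← mul_rpow hσ.le (sub_nonneg.2 hσp), mul_one_sub, rpow_sub_one hσ.ne',
    mul_div_cancel₀ _ hσ.ne']

theorem rpow_add_one_mul_one_sub_rpow_sub_one_lt {σ p : ℝ} (hp : 1 < p) (hσ0 : 0 < σ) (hσ1 : σ < 1) :
    σ ^ (p + 1) * (1 - σ ^ (p - 1)) ^ (p + 1) < (1 + σ ^ p) * (1 - σ ^ p) := by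
  set t := σ ^ p
  have ht0 : 0 < t := rpow_pos_of_pos hσ0 p
  have htσ : t < σ := rpow_lt_self_of_lt_one hσ0 hσ1 hp
  calc σ ^ (p + 1) * (1 - σ ^ (p - 1)) ^ (p + 1)
      = (σ - t) ^ (p + 1) :=
        rpow_mul_one_sub_rpow_sub_one hσ0 (rpow_le_one hσ0.le hσ1.le (by linarith)) _
    _ < σ - t := rpow_lt_self_of_lt_one (by linarith) (by linarith) (by linarith)
    _ < (1 + t) * (1 - t) := by nlinarith

theorem stmt1 (ψ ζ σ : ℝ) (hψ : 0 < ψ) (hψ1 : ψ < 1) (hζ : ζ = ψ / (2 - ψ))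
    (hσ : 0 < σ) (hσ1 : σ < 1) :
    σ ^ (2 / ψ) * (1 - σ ^ (1 / ζ - 1)) ^ (2 / ψ)
      < (1 + σ ^ (1 / ζ)) * (1 - σ ^ (1 / ζ)) := by
  have hinv : 1 / ζ = 2 / ψ - 1 := by
    rw [hζ]; field_simp
  have hexp : 2 / ψ = 1 / ζ + 1 := by linarith
  have hp : 1 < 1 / ζ := by
    rw [hinv, lt_sub_iff_add_lt, lt_div_iff₀ hψ]; linarith
  rw [hexp]
  exact rpow_add_one_mul_one_sub_rpow_sub_one_lt hp hσ hσ1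
end

section
/- Let ψ ∈ (0,1), ζ = ψ/(2-ψ), and let (z₁, z₂) ∈ ℝ × ℝ with z₂ ≠ 0. Set ‖z‖ = √(z₁² + z₂²). Then (z₂/‖z‖) · ( z₁/‖z‖ - ⌊z₁/‖z‖⌉^ζ - ⌊z₂/‖z‖⌉^ψ ) < 0, where ⌊x⌉^a := sign(x)·|x|^a. -/
/-- signed power `⌊x⌉^a = sign(x)·|x|^a` -/
noncomputable def spow (x a : ℝ) : ℝ := Real.sign x * |x| ^ a

/-!
On the unit circle `a² + b² = 1` with `b ≠ 0` one has `b · ⌊b⌉^ψ = |b|^(1+ψ)` and, since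
`|a| ≤ |a|^ζ` for `ζ ≤ 1`, `b (a - ⌊a⌉^ζ) ≤ |b| (|a|^ζ - |a|)`. So it suffices that
`|a|^ζ - |a| < |b|^ψ`, which holds because `|a|^ζ - |a| ≤ 1 - a² = b² < |b|^ψ` when `a ≠ 0`
(then `|b| < 1` and `ψ < 2`), and reads `0 < |b|^ψ` when `a = 0`.
-/

namespace Real

lemma sign_mul_abs (x : ℝ) : sign x * |x| = x := by
  rcases lt_trichotomy x 0 with h | rfl | h
  · rw [sign_of_neg h, abs_of_neg h]; ring
  · simp
  · rw [sign_of_pos h, abs_of_pos h]; ring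

lemma self_mul_sign (x : ℝ) : x * sign x = |x| := by
  rcases lt_trichotomy x 0 with h | rfl | h
  · rw [sign_of_neg h, abs_of_neg h]; ring
  · simp
  · rw [sign_of_pos h, abs_of_pos h]; ring

lemma abs_sign_le_one (x : ℝ) : |sign x| ≤ 1 := by
  rcases sign_apply_eq x with h | h | h <;> simp [h]

end Real

lemma mul_spow_self (x a : ℝ) : x * spow x a = |x| * |x| ^ a := by
  rw [spow, ← mul_assoc, Real.self_mul_sign]

lemma sub_spow_eq (x a : ℝ) : x - spow x a = Real.sign x * (|x| - |x| ^ a) := by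
  rw [spow, mul_sub, Real.sign_mul_abs]

lemma mul_sub_spow_le {x a : ℝ} (y : ℝ) (hx : |x| ≤ 1) (ha : a ≤ 1) :
    y * (x - spow x a) ≤ |y| * (|x| ^ a - |x|) := by
  have hle : |x| ≤ |x| ^ a := Real.self_le_rpow_of_le_one (abs_nonneg x) hx ha
  calc y * (x - spow x a) ≤ |y * (x - spow x a)| := le_abs_self _
    _ = |y| * (|Real.sign x| * (|x| ^ a - |x|)) := by
        rw [sub_spow_eq, abs_mul, abs_mul, abs_sub_comm, abs_of_nonneg (sub_nonneg.2 hle)]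
    _ ≤ |y| * (|x| ^ a - |x|) := by
        gcongr
        exact mul_le_of_le_one_left (sub_nonneg.2 hle) (Real.abs_sign_le_one x)

lemma rpow_abs_sub_abs_lt_rpow_abs {a b ζ ψ : ℝ} (hab : a ^ 2 + b ^ 2 = 1) (hb : b ≠ 0)
    (hζ : 0 < ζ) (hψ : ψ < 2) : |a| ^ ζ - |a| < |b| ^ ψ := by
  have hb_pos : 0 < |b| := abs_pos.2 hb
  rcases eq_or_ne a 0 with rfl | ha
  · rw [abs_zero, Real.zero_rpow hζ.ne', sub_zero]
    exact Real.rpow_pos_of_pos hb_pos ψ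
  have ha_le : |a| ≤ 1 := by nlinarith [sq_abs a, sq_nonneg b, abs_nonneg a]
  have hb_lt : |b| < 1 := by nlinarith [sq_abs a, sq_abs b, abs_pos.2 ha]
  have hb_sq : b ^ 2 < |b| ^ ψ := by
    rw [← sq_abs, ← Real.rpow_two]
    exact Real.rpow_lt_rpow_of_exponent_gt hb_pos hb_lt hψ
  have ha_rpow : |a| ^ ζ ≤ 1 := Real.rpow_le_one (abs_nonneg a) ha_le hζ.le
  nlinarith [sq_abs a, abs_nonneg a]

lemma mul_sub_spow_sub_spow_neg {a b ζ ψ : ℝ} (hab : a ^ 2 + b ^ 2 = 1) (hb : b ≠ 0)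
    (hζ0 : 0 < ζ) (hζ1 : ζ ≤ 1) (hψ : ψ < 2) : b * (a - spow a ζ - spow b ψ) < 0 := by
  have ha : |a| ≤ 1 := by nlinarith [sq_abs a, sq_nonneg b, abs_nonneg a]
  have hkey := mul_lt_mul_of_pos_left (rpow_abs_sub_abs_lt_rpow_abs hab hb hζ0 hψ) (abs_pos.2 hb)
  calc b * (a - spow a ζ - spow b ψ) = b * (a - spow a ζ) - |b| * |b| ^ ψ := by
        rw [← mul_spow_self]; ring
    _ ≤ |b| * (|a| ^ ζ - |a|) - |b| * |b| ^ ψ := sub_le_sub_right (mul_sub_spow_le b ha hζ1) _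
    _ < 0 := sub_neg.2 hkey

lemma div_sqrt_sq_add_div_sqrt_sq {x y : ℝ} (h : 0 < x ^ 2 + y ^ 2) :
    (x / √(x ^ 2 + y ^ 2)) ^ 2 + (y / √(x ^ 2 + y ^ 2)) ^ 2 = 1 := by
  rw [div_pow, div_pow, ← add_div, Real.sq_sqrt h.le, div_self h.ne']

theorem stmt2 (ψ ζ : ℝ) (hψ : 0 < ψ) (hψ1 : ψ < 1) (hζ : ζ = ψ / (2 - ψ))
    (z₁ z₂ : ℝ) (hz₂ : z₂ ≠ 0) :
    (z₂ / Real.sqrt (z₁ ^ 2 + z₂ ^ 2)) *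
      (z₁ / Real.sqrt (z₁ ^ 2 + z₂ ^ 2)
        - spow (z₁ / Real.sqrt (z₁ ^ 2 + z₂ ^ 2)) ζ
        - spow (z₂ / Real.sqrt (z₁ ^ 2 + z₂ ^ 2)) ψ) < 0 := by
  have hnorm : 0 < z₁ ^ 2 + z₂ ^ 2 := by positivity
  have hζ0 : 0 < ζ := hζ ▸ div_pos hψ (by linarith)
  have hζ1 : ζ ≤ 1 := hζ ▸ (div_le_one (by linarith)).2 (by linarith)
  refine mul_sub_spow_sub_spow_neg (div_sqrt_sq_add_div_sqrt_sq hnorm) ?_ hζ0 hζ1 (by linarith)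
  exact div_ne_zero hz₂ (Real.sqrt_pos.2 hnorm).ne'
end

section
/- Let C₁, C₂ > 0, λ(x) = C₁ e^{-C₂x}, let φ ∈ C¹(ℝ₊) and β⁰ ∈ L²(0,1) with the compatibility μβ⁰(1) = φ'(0) for some μ ≠ 0. Define β(x,t) = β⁰( (1/C₂)·ln(e^{C₂x} + C₁C₂ t) ) if t < (e^{C₂} - e^{C₂x})/(C₁C₂), and β(x,t) = μ⁻¹ φ'( t + (e^{C₂x} - e^{C₂})/(C₁C₂) ) otherwise. Then β satisfies β_t = λ(x) β_x in the sense of distributions on (0,1)×(0,∞), with β(1,t) = μ⁻¹φ'(t) and β(x,0) = β⁰(x). -/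
open MeasureTheory

private lemma inner_zero (C₁ C₂ : ℝ) (hC₁ : 0 < C₁) (hC₂ : 0 < C₂)
    (lam : ℝ → ℝ) (hlam : ∀ x, lam x = C₁ * Real.exp (-C₂ * x))
    (η : ℝ × ℝ → ℝ) (hη : ContDiff ℝ (⊤ : ℕ∞) η) (hηc : HasCompactSupport η) (u : ℝ) :
    ∫ x : ℝ, (deriv (fun τ => η (x, τ)) (u - (Real.exp (C₂ * x) - Real.exp C₂) / (C₁ * C₂))
      - deriv (fun y => lam y * η (y, u - (Real.exp (C₂ * x) - Real.exp C₂) / (C₁ * C₂))) x) = 0 := by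
  set F : ℝ → ℝ := fun x => (Real.exp (C₂ * x) - Real.exp C₂) / (C₁ * C₂) with hF
  set s : ℝ → ℝ := fun x => u - F x with hs
  set G : ℝ → ℝ := fun x => lam x * η (x, s x) with hG
  set N : ℝ → ℝ := fun x => deriv (fun τ => η (x, τ)) (s x)
      - deriv (fun y => lam y * η (y, s x)) x with hN
  have hηd : Differentiable ℝ η := hη.differentiable (by simp)
  have hFd : ∀ x, HasDerivAt F (Real.exp (C₂ * x) * C₂ / (C₁ * C₂)) x := by
    intro x
    have h1 : HasDerivAt (fun y : ℝ => C₂ * y) (C₂ * 1) x := (hasDerivAt_id x).const_mul C₂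
    have h2 : HasDerivAt (fun y : ℝ => Real.exp (C₂ * y)) (Real.exp (C₂ * x) * (C₂ * 1)) x := h1.exp
    have h3 := (h2.sub_const (Real.exp C₂)).div_const (C₁ * C₂)
    simpa [mul_one] using h3
  have hlamd : ∀ x, HasDerivAt lam (-C₂ * lam x) x := by
    intro x
    have h1 : HasDerivAt (fun y : ℝ => -C₂ * y) (-C₂ * 1) x := (hasDerivAt_id x).const_mul (-C₂)
    have h2 := (h1.exp).const_mul C₁
    have heq : (fun y : ℝ => C₁ * Real.exp (-C₂ * y)) = lam := by funext y; rw [hlam]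
    rw [heq] at h2
    rw [show -C₂ * lam x = C₁ * (Real.exp (-C₂ * x) * (-C₂ * 1)) by rw [hlam]; ring]
    exact h2
  have hlamF : ∀ x, lam x * (Real.exp (C₂ * x) * C₂ / (C₁ * C₂)) = 1 := by
    intro x
    rw [hlam, show -C₂ * x = -(C₂ * x) by ring, Real.exp_neg]
    field_simp
  have hGd : ∀ x, HasDerivAt G (-(N x)) x := by
    intro x
    have hsd : HasDerivAt s (-(Real.exp (C₂ * x) * C₂ / (C₁ * C₂))) x := by
      have := (hasDerivAt_const x u).sub (hFd x)
      rwa [zero_sub] at this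
    have hcurve : HasDerivAt (fun y => (y, s y)) ((1 : ℝ), -(Real.exp (C₂ * x) * C₂ / (C₁ * C₂))) x :=
      (hasDerivAt_id x).prodMk hsd
    have hηp : HasFDerivAt η (fderiv ℝ η (x, s x)) (x, s x) := (hηd (x, s x)).hasFDerivAt
    have hcomp : HasDerivAt (fun y => η (y, s y))
        ((fderiv ℝ η (x, s x)) (1, -(Real.exp (C₂ * x) * C₂ / (C₁ * C₂)))) x :=
      hηp.comp_hasDerivAt x hcurve
    have hmain := (hlamd x).mul hcomp
    have hd2 : deriv (fun τ => η (x, τ)) (s x) = (fderiv ℝ η (x, s x)) (0, 1) := by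
      have : HasDerivAt (fun τ => η (x, τ)) ((fderiv ℝ η (x, s x)) (0, 1)) (s x) :=
        hηp.comp_hasDerivAt (s x) ((hasDerivAt_const (s x) x).prodMk (hasDerivAt_id (s x)))
      exact this.deriv
    have hd1 : deriv (fun y => lam y * η (y, s x)) x
        = -C₂ * lam x * η (x, s x) + lam x * (fderiv ℝ η (x, s x)) (1, 0) := by
      have hc2 : HasDerivAt (fun y => η (y, s x)) ((fderiv ℝ η (x, s x)) (1, 0)) x :=
        hηp.comp_hasDerivAt x ((hasDerivAt_id x).prodMk (hasDerivAt_const x (s x)))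
      exact ((hlamd x).mul hc2).deriv
    have hlin : (fderiv ℝ η (x, s x)) (1, -(Real.exp (C₂ * x) * C₂ / (C₁ * C₂)))
        = (fderiv ℝ η (x, s x)) (1, 0)
          - (Real.exp (C₂ * x) * C₂ / (C₁ * C₂)) * (fderiv ℝ η (x, s x)) (0, 1) := by
      have : ((1 : ℝ), -(Real.exp (C₂ * x) * C₂ / (C₁ * C₂)))
          = ((1 : ℝ), (0 : ℝ)) - (Real.exp (C₂ * x) * C₂ / (C₁ * C₂)) • ((0 : ℝ), (1 : ℝ)) := by
        simp [Prod.ext_iff]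
      rw [this, (fderiv ℝ η (x, s x)).map_sub, (fderiv ℝ η (x, s x)).map_smul, smul_eq_mul]
    refine hmain.congr_deriv (Eq.symm ?_)
    simp only [hN, hd2, hd1, hlin]
    linear_combination (fderiv ℝ η (x, s x)) (0, 1) * hlamF x
  have hlamC : ContDiff ℝ 1 lam := by
    have : lam = fun y => C₁ * Real.exp (-C₂ * y) := funext hlam
    rw [this]
    exact contDiff_const.mul ((contDiff_const.mul contDiff_id).exp)
  have hFC : ContDiff ℝ 1 F := by
    apply ContDiff.div_const
    exact ((contDiff_const.mul contDiff_id).exp).sub contDiff_const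
  have hGC : ContDiff ℝ 1 G := by
    apply hlamC.mul
    exact (hη.of_le (by simp)).comp (contDiff_id.prodMk (contDiff_const.sub hFC))
  have hGsupp : HasCompactSupport G := by
    apply HasCompactSupport.intro (hηc.image continuous_fst)
    intro x hx
    have h0 : η (x, s x) = 0 := by
      apply image_eq_zero_of_notMem_tsupport
      intro hmem
      exact hx ⟨(x, s x), hmem, rfl⟩
    simp only [hG, h0, mul_zero]
  have hder : ∀ x, deriv G x = -(N x) := fun x => (hGd x).deriv
  have hNint : Integrable (fun x => -(N x)) := by
    have heq : (fun x => -(N x)) = deriv G := funext fun x => (hder x).symm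
    rw [heq]
    exact (hGC.continuous_deriv le_rfl).integrable_of_hasCompactSupport hGsupp.deriv
  have hGint : Integrable G := hGC.continuous.integrable_of_hasCompactSupport hGsupp
  have hzero : ∫ x, -(N x) = 0 :=
    integral_eq_zero_of_hasDerivAt_of_integrable hGd hNint hGint
  rw [integral_neg] at hzero
  exact neg_eq_zero.mp hzero

theorem stmt11 (C₁ C₂ μ : ℝ) (hC₁ : 0 < C₁) (hC₂ : 0 < C₂) (hμ : μ ≠ 0)
    (lam : ℝ → ℝ) (hlam : ∀ x, lam x = C₁ * Real.exp (-C₂ * x))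
    (φ : ℝ → ℝ) (hφ : ContDiff ℝ 1 φ)
    (β0 : ℝ → ℝ)
    (hβ0 : MemLp β0 2 (volume.restrict (Set.Ioo (0:ℝ) 1)))
    (hcomp : μ * β0 1 = deriv φ 0)
    (β : ℝ → ℝ → ℝ)
    (hβ : ∀ x t, β x t =
      if t < (Real.exp C₂ - Real.exp (C₂ * x)) / (C₁ * C₂)
      then β0 ((1 / C₂) * Real.log (Real.exp (C₂ * x) + C₁ * C₂ * t))
      else μ⁻¹ * deriv φ (t + (Real.exp (C₂ * x) - Real.exp C₂) / (C₁ * C₂))) :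
    (∀ η : ℝ × ℝ → ℝ, ContDiff ℝ (⊤ : ℕ∞) η → HasCompactSupport η →
      tsupport η ⊆ Set.Ioo (0:ℝ) 1 ×ˢ Set.Ioi (0:ℝ) →
      ∫ p : ℝ × ℝ, β p.1 p.2 *
        (deriv (fun τ => η (p.1, τ)) p.2
          - deriv (fun y => lam y * η (y, p.2)) p.1) = 0) ∧
    (∀ t ≥ (0:ℝ), β 1 t = μ⁻¹ * deriv φ t) ∧
    (∀ x ∈ Set.Icc (0:ℝ) 1, β x 0 = β0 x) := by
  have hc : (0:ℝ) < C₁ * C₂ := mul_pos hC₁ hC₂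
  refine ⟨?_, ?_, ?_⟩
  · -- the PDE in the sense of distributions
    intro η hη hηc hηsupp
    set F : ℝ → ℝ := fun x => (Real.exp (C₂ * x) - Real.exp C₂) / (C₁ * C₂) with hF
    set B : ℝ → ℝ := fun s => if s < 0
        then β0 ((1 / C₂) * Real.log (C₁ * C₂ * s + Real.exp C₂))
        else μ⁻¹ * deriv φ s with hB
    have key : ∀ x t, β x t = B (t + F x) := by
      intro x t
      rw [hβ]
      have harg : C₁ * C₂ * (t + F x) + Real.exp C₂ = Real.exp (C₂ * x) + C₁ * C₂ * t := by
        simp only [hF]; field_simp; ring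
      have hcond : t < (Real.exp C₂ - Real.exp (C₂ * x)) / (C₁ * C₂) ↔ t + F x < 0 := by
        rw [show (Real.exp C₂ - Real.exp (C₂ * x)) / (C₁ * C₂) = -F x by simp only [hF]; ring]
        constructor <;> intro h <;> linarith
      simp only [hB, harg, hF]
      exact if_congr hcond (by simp only [hF] at harg; rw [harg]) rfl
    -- rewrite the integrand
    have hre : (fun p : ℝ × ℝ => β p.1 p.2 *
        (deriv (fun τ => η (p.1, τ)) p.2 - deriv (fun y => lam y * η (y, p.2)) p.1))
        = fun p : ℝ × ℝ => B (p.2 + F p.1) *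
        (deriv (fun τ => η (p.1, τ)) p.2 - deriv (fun y => lam y * η (y, p.2)) p.1) := by
      funext p; rw [key]
    rw [hre, Measure.volume_eq_prod]
    -- shear change of variables
    have hFc : Continuous F :=
      ((Real.continuous_exp.comp (continuous_const.mul continuous_id)).sub
        continuous_const).div_const _
    let Te : Homeomorph (ℝ × ℝ) (ℝ × ℝ) :=
      { toFun := fun q => (q.1, q.2 - F q.1)
        invFun := fun q => (q.1, q.2 + F q.1)
        left_inv := fun q => by simp
        right_inv := fun q => by simp
        continuous_toFun := continuous_fst.prodMk
          (continuous_snd.sub (hFc.comp continuous_fst))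
        continuous_invFun := continuous_fst.prodMk
          (continuous_snd.add (hFc.comp continuous_fst)) }
    have hTemb : MeasurableEmbedding (fun q : ℝ × ℝ => (q.1, q.2 - F q.1)) :=
      Te.measurableEmbedding
    have hT : MeasurePreserving (fun q : ℝ × ℝ => (q.1, q.2 - F q.1))
        ((volume : Measure ℝ).prod volume) ((volume : Measure ℝ).prod volume) := by
      apply MeasurePreserving.skew_product (g := fun x u => u - F x) (MeasurePreserving.id _)
      · exact measurable_snd.sub (hFc.measurable.comp measurable_fst)
      · exact Filter.Eventually.of_forall fun x =>
          (measurePreserving_sub_right volume (F x)).map_eq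
    have hcv : (∫ p : ℝ × ℝ, B (p.2 + F p.1) *
        (deriv (fun τ => η (p.1, τ)) p.2 - deriv (fun y => lam y * η (y, p.2)) p.1)
          ∂((volume : Measure ℝ).prod volume))
        = ∫ q : ℝ × ℝ, B q.2 *
        (deriv (fun τ => η (q.1, τ)) (q.2 - F q.1)
          - deriv (fun y => lam y * η (y, q.2 - F q.1)) q.1)
          ∂((volume : Measure ℝ).prod volume) := by
      rw [← hT.integral_comp hTemb]
      apply integral_congr_ae
      filter_upwards with q
      simp only [sub_add_cancel]
    rw [hcv]
    by_cases hint : Integrable (fun q : ℝ × ℝ => B q.2 *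
        (deriv (fun τ => η (q.1, τ)) (q.2 - F q.1)
          - deriv (fun y => lam y * η (y, q.2 - F q.1)) q.1))
        ((volume : Measure ℝ).prod volume)
    · rw [MeasureTheory.integral_prod_symm _ hint]
      have hin : ∀ u : ℝ, ∫ x : ℝ, B u *
          (deriv (fun τ => η (x, τ)) (u - F x)
            - deriv (fun y => lam y * η (y, u - F x)) x) = 0 := by
        intro u
        rw [integral_const_mul]
        rw [inner_zero C₁ C₂ hC₁ hC₂ lam hlam η hη hηc u, mul_zero]
      simp only [hin, integral_zero]
    · exact integral_undef hint
  · -- boundary condition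
    intro t ht
    rw [hβ]
    rw [if_neg, mul_one, sub_self, zero_div, add_zero]
    rw [mul_one, sub_self, zero_div]
    exact not_lt.mpr ht
  · -- initial condition
    intro x hx
    rw [hβ]
    rcases lt_or_eq_of_le hx.2 with h1 | h1
    · rw [if_pos]
      · rw [mul_zero, add_zero, Real.log_exp]
        congr 1
        field_simp
      · apply div_pos _ hc
        apply sub_pos.mpr
        apply Real.exp_lt_exp.mpr
        nlinarith [hx.1]
    · subst h1
      rw [if_neg, mul_one, sub_self, zero_div, add_zero, ← hcomp]
      · field_simp
      · rw [mul_one, sub_self, zero_div]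
        exact lt_irrefl 0
end

section
/- Let C₁, C₂ > 0, λ(x) = C₁e^{-C₂x}, μ ≠ 0, and suppose φ : ℝ₊ → ℝ is C¹ with φ'(t) = 0 for all t ≥ T₀. Let β be the solution of β_t = λ(x)β_x on (0,1)×(0,∞) with β(1,t) = μ⁻¹φ'(t), and let α solve α_t = -λ(x)α_x with α(0,t) = β(0,t). Then α(x,t) = β(x,t) = 0 for all x ∈ [0,1] and all t ≥ T₀ + (2e^{C₂} - 2)/(C₁C₂). -/
/-!
Along the characteristics of `β_t = λ(x) β_x` and `α_t = -λ(x) α_x` the solutions are transported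
unchanged, and a characteristic needs the time `Λ(x) = ∫₀ˣ dξ / λ(ξ) = (e^{C₂x} - 1) / (C₁C₂)` to
travel from `0` to `x`. So `β` is the boundary datum `μ⁻¹φ'` delayed by at most `Λ(1)` and vanishes
after `T₀ + Λ(1)`; `α` is `β(0, ·)` delayed by at most `Λ(1)` and vanishes after `T₀ + 2Λ(1)`.
-/

open Real Set

theorem eq_zero_of_delayed_boundary_data {u : ℝ → ℝ → ℝ} {g τ : ℝ → ℝ} {s : Set ℝ} {T L : ℝ}
    (hT : 0 ≤ T) (hg : ∀ t ≥ T, g t = 0) (hτ : ∀ x ∈ s, τ x ≤ L)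
    (hu : ∀ x ∈ s, ∀ t, τ x ≤ t → u x t = g (t - τ x)) :
    ∀ x ∈ s, ∀ t, T + L ≤ t → u x t = 0 := by
  intro x hx t ht
  have := hτ x hx
  rw [hu x hx t (by linarith), hg _ (by linarith)]

noncomputable def transitTime (C₁ C₂ x : ℝ) : ℝ := (exp (C₂ * x) - 1) / (C₁ * C₂)

theorem transitTime_nonneg {C₁ C₂ x : ℝ} (hC₁ : 0 ≤ C₁) (hC₂ : 0 ≤ C₂) (hx : 0 ≤ x) :
    0 ≤ transitTime C₁ C₂ x :=
  div_nonneg (sub_nonneg.2 (one_le_exp (mul_nonneg hC₂ hx))) (mul_nonneg hC₁ hC₂)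

theorem transitTime_mono {C₁ C₂ : ℝ} (hC₁ : 0 ≤ C₁) (hC₂ : 0 ≤ C₂) :
    Monotone (transitTime C₁ C₂) := fun _ _ hxy =>
  div_le_div_of_nonneg_right
    (sub_le_sub_right (exp_le_exp.2 (mul_le_mul_of_nonneg_left hxy hC₂)) 1) (mul_nonneg hC₁ hC₂)

theorem transitTime_sub (C₁ C₂ x y : ℝ) :
    transitTime C₁ C₂ x - transitTime C₁ C₂ y = (exp (C₂ * x) - exp (C₂ * y)) / (C₁ * C₂) := by
  unfold transitTime
  ring

theorem stmt12_general (C₁ C₂ μ T₀ : ℝ) (hC₁ : 0 < C₁) (hC₂ : 0 < C₂)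
    (hT₀ : 0 ≤ T₀)
    (φ : ℝ → ℝ) (hφ' : ∀ t ≥ T₀, deriv φ t = 0)
    (β α : ℝ → ℝ → ℝ)
    (hβ : ∀ x ∈ Set.Icc (0:ℝ) 1, ∀ t,
      (Real.exp C₂ - Real.exp (C₂ * x)) / (C₁ * C₂) ≤ t →
      β x t = μ⁻¹ * deriv φ (t + (Real.exp (C₂ * x) - Real.exp C₂) / (C₁ * C₂)))
    (hα : ∀ x ∈ Set.Icc (0:ℝ) 1, ∀ t,
      (Real.exp (C₂ * x) - 1) / (C₁ * C₂) ≤ t →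
      α x t = β 0 (t - (Real.exp (C₂ * x) - 1) / (C₁ * C₂))) :
    ∀ x ∈ Set.Icc (0:ℝ) 1, ∀ t, T₀ + (2 * Real.exp C₂ - 2) / (C₁ * C₂) ≤ t →
      α x t = 0 ∧ β x t = 0 := by
  set Λ := transitTime C₁ C₂
  have hΛ_nonneg : ∀ x ∈ Icc (0:ℝ) 1, 0 ≤ Λ x := fun x hx => transitTime_nonneg hC₁.le hC₂.le hx.1
  have hΛ_le : ∀ x ∈ Icc (0:ℝ) 1, Λ x ≤ Λ 1 := fun x hx => transitTime_mono hC₁.le hC₂.le hx.2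
  have hΛ₁ : 0 ≤ Λ 1 := hΛ_nonneg 1 ⟨zero_le_one, le_rfl⟩
  have hβ_zero : ∀ x ∈ Icc (0:ℝ) 1, ∀ t, T₀ + Λ 1 ≤ t → β x t = 0 := by
    refine eq_zero_of_delayed_boundary_data (g := fun t => μ⁻¹ * deriv φ t) (τ := fun x => Λ 1 - Λ x)
      hT₀ (fun t ht => by simp only [hφ' t ht, mul_zero]) (fun x hx => by linarith [hΛ_nonneg x hx])
      fun x hx t ht => ?_
    rw [hβ x hx t (by simpa only [Λ, transitTime_sub, mul_one] using ht), transitTime_sub, mul_one]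
    congr 2
    ring
  have hα_zero := eq_zero_of_delayed_boundary_data (by linarith) (hβ_zero 0 ⟨le_rfl, zero_le_one⟩)
    hΛ_le hα
  have h2Λ : (2 * exp C₂ - 2) / (C₁ * C₂) = Λ 1 + Λ 1 := by
    simp only [Λ, transitTime, mul_one]
    ring
  intro x hx t ht
  exact ⟨hα_zero x hx t (by linarith), hβ_zero x hx t (by linarith)⟩

theorem stmt12 (C₁ C₂ μ T₀ : ℝ) (hC₁ : 0 < C₁) (hC₂ : 0 < C₂) (hμ : μ ≠ 0)
    (hT₀ : 0 ≤ T₀)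
    (φ : ℝ → ℝ) (hφ : ContDiff ℝ 1 φ) (hφ' : ∀ t ≥ T₀, deriv φ t = 0)
    (β α : ℝ → ℝ → ℝ)
    (hβ : ∀ x ∈ Set.Icc (0:ℝ) 1, ∀ t,
      (Real.exp C₂ - Real.exp (C₂ * x)) / (C₁ * C₂) ≤ t →
      β x t = μ⁻¹ * deriv φ (t + (Real.exp (C₂ * x) - Real.exp C₂) / (C₁ * C₂)))
    (hα : ∀ x ∈ Set.Icc (0:ℝ) 1, ∀ t,
      (Real.exp (C₂ * x) - 1) / (C₁ * C₂) ≤ t →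
      α x t = β 0 (t - (Real.exp (C₂ * x) - 1) / (C₁ * C₂))) :
    ∀ x ∈ Set.Icc (0:ℝ) 1, ∀ t, T₀ + (2 * Real.exp C₂ - 2) / (C₁ * C₂) ≤ t →
      α x t = 0 ∧ β x t = 0 :=
  stmt12_general C₁ C₂ μ T₀ hC₁ hC₂ hT₀ φ hφ' β α hβ hα
end

section
/- Let λ(x) = C₁e^{-C₂x} with C₁, C₂ > 0, let λ(x): [0,1] → ℝ, and consider continuous a(x) > 0 for all x. Then the solution (f,g) of the Goursat system from Lemma 1, given by the characteristics formulas f(x,ξ) = e^{-∫₀^{Λ(ξ)} λ'(Λ⁻¹(σ))dσ}·[ g(Λ⁻¹(Λ(x)-Λ(ξ)),0) + ∫₀^{Λ(ξ)} e^{∫₀^σ λ'(Λ⁻¹(τ))dτ} μ(Λ⁻¹(Λ(x)-Λ(ξ)+σ)) g(Λ⁻¹(Λ(x)-Λ(ξ)+σ), Λ⁻¹(σ)) dσ ], satisfies f(x,ξ) > 0 and g(x,ξ) > 0 strictly for all (x,ξ) ∈ 𝒯, given that g(x,x) = C > 0 and μ > 0. -/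
/-!
Measure distances from the diagonal by the characteristic level `Λ x - Λ ξ`. In the
representation of `g` at level `d`, the integrand only involves `f` at levels `< d` (away from a
single endpoint), and the representation of `f` at level `d` only involves `g` at the same level
`d`; all exponential weights are positive and `μ > 0`, while `g` starts from `C > 0`. Hence a
counterexample of minimal level, which exists by compactness of `𝒯` and continuity of `f` and
`g`, is impossible.
-/

/-- The triangle 𝒯 = {(x,ξ) : 0 ≤ ξ ≤ x ≤ 1}. -/
def Tri : Set (ℝ × ℝ) := {p | 0 ≤ p.2 ∧ p.2 ≤ p.1 ∧ p.1 ≤ 1}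

open Set Real MeasureTheory

lemma isCompact_Tri : IsCompact Tri := by
  have hclosed : IsClosed Tri :=
    (isClosed_le continuous_const continuous_snd).inter
      ((isClosed_le continuous_snd continuous_fst).inter
        (isClosed_le continuous_fst continuous_const))
  have hsub : Tri ⊆ Icc (0:ℝ) 1 ×ˢ Icc (0:ℝ) 1 := fun _ ⟨h0, hξx, hx1⟩ =>
    ⟨⟨h0.trans hξx, hx1⟩, h0, hξx.trans hx1⟩
  exact (isCompact_Icc.prod isCompact_Icc).of_isClosed_subset hclosed hsub

lemma exp_mul_add_integral_pos {a c h : ℝ} {F : ℝ → ℝ} (hc : 0 < c) (hh : 0 ≤ h)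
    (hF : ∀ σ ∈ Ioo 0 h, 0 ≤ F σ) : 0 < exp a * (c + ∫ σ in (0:ℝ)..h, F σ) := by
  have : 0 ≤ ∫ σ in (0:ℝ)..h, F σ := by
    rw [intervalIntegral.integral_of_le hh, integral_Ioc_eq_integral_Ioo]
    exact setIntegral_nonneg measurableSet_Ioo hF
  positivity

lemma integral_inv_mul_exp_neg {C₁ C₂ : ℝ} (hC₁ : C₁ ≠ 0) (hC₂ : C₂ ≠ 0) (x : ℝ) :
    ∫ s in (0:ℝ)..x, (C₁ * exp (-C₂ * s))⁻¹ = (exp (C₂ * x) - 1) / (C₁ * C₂) := by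
  have hderiv : ∀ s ∈ uIcc (0:ℝ) x,
      HasDerivAt (fun s => exp (C₂ * s) / (C₁ * C₂)) (C₁ * exp (-C₂ * s))⁻¹ s := by
    intro s _
    refine ((hasDerivAt_const_mul C₂).exp.div_const (C₁ * C₂)).congr_deriv ?_
    rw [neg_mul, exp_neg]
    field_simp
  rw [intervalIntegral.integral_eq_sub_of_hasDerivAt hderiv
    ((Continuous.inv₀ (by fun_prop) fun s => mul_ne_zero hC₁ (exp_ne_zero _)).intervalIntegrable _ _)]
  simp only [mul_zero, exp_zero]
  ring

section Characteristics

variable {Λ Λinv : ℝ → ℝ}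

lemma Λ_bounds_of_mem_Tri (hΛ : Monotone Λ) (hΛ0 : Λ 0 = 0) {x ξ : ℝ} (hp : (x, ξ) ∈ Tri) :
    0 ≤ Λ ξ ∧ Λ ξ ≤ Λ x ∧ Λ x ≤ Λ 1 := by
  obtain ⟨h0, hξx, hx1⟩ := hp
  exact ⟨hΛ0 ▸ hΛ h0, hΛ hξx, hΛ hx1⟩

lemma mk_Λinv_mem_Tri (hΛ : StrictMono Λ) (hΛ0 : Λ 0 = 0)
    (hinv : ∀ t, 0 ≤ t → Λ (Λinv t) = t) {s t : ℝ} (hs : 0 ≤ s) (hst : s ≤ t) (ht : t ≤ Λ 1) :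
    (Λinv t, Λinv s) ∈ Tri := by
  have ht0 : Λ (Λinv t) = t := hinv t (hs.trans hst)
  refine ⟨?_, ?_, ?_⟩ <;> rw [← hΛ.le_iff_le]
  · rwa [hΛ0, hinv s hs]
  · rwa [hinv s hs, ht0]
  · rwa [ht0]

variable {mu : ℝ → ℝ} {f g : ℝ → ℝ → ℝ}

lemma g_pos_of_f_nonneg_below (hΛ : StrictMono Λ) (hΛ0 : Λ 0 = 0)
    (hinv : ∀ t, 0 ≤ t → Λ (Λinv t) = t) {C : ℝ} (hC : 0 < C)
    (hmu : ∀ x ∈ Icc (0:ℝ) 1, 0 < mu x) (α : ℝ → ℝ → ℝ) (β : ℝ → ℝ → ℝ → ℝ)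
    (hgrep : ∀ x ξ : ℝ, (x, ξ) ∈ Tri →
      g x ξ = exp (α x ξ) * (C + ∫ σ in (0:ℝ)..((Λ x - Λ ξ) / 2),
        exp (β x ξ σ) * mu (Λinv ((Λ x + Λ ξ) / 2 + σ)) *
          f (Λinv ((Λ x + Λ ξ) / 2 + σ)) (Λinv ((Λ x + Λ ξ) / 2 - σ))))
    {x ξ : ℝ} (hp : (x, ξ) ∈ Tri)
    (hf : ∀ y η, (y, η) ∈ Tri → Λ y - Λ η < Λ x - Λ ξ → 0 ≤ f y η) : 0 < g x ξ := by
  obtain ⟨hξ0, hξx, hx1⟩ := Λ_bounds_of_mem_Tri hΛ.monotone hΛ0 hp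
  rw [hgrep x ξ hp]
  refine exp_mul_add_integral_pos hC (by linarith) fun σ ⟨hσ0, hσd⟩ => ?_
  have hq := mk_Λinv_mem_Tri hΛ hΛ0 hinv (s := (Λ x + Λ ξ) / 2 - σ)
    (t := (Λ x + Λ ξ) / 2 + σ) (by linarith) (by linarith) (by linarith)
  have hfq := hf _ _ hq (by rw [hinv _ (by linarith), hinv _ (by linarith)]; linarith)
  have hmuq := hmu _ ⟨hq.1.trans hq.2.1, hq.2.2⟩
  positivity

lemma f_pos_of_g_pos (hΛ : StrictMono Λ) (hΛ0 : Λ 0 = 0)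
    (hinv : ∀ t, 0 ≤ t → Λ (Λinv t) = t)
    (hmu : ∀ x ∈ Icc (0:ℝ) 1, 0 < mu x) (α : ℝ → ℝ → ℝ) (β : ℝ → ℝ → ℝ → ℝ)
    (hfrep : ∀ x ξ : ℝ, (x, ξ) ∈ Tri →
      f x ξ = exp (α x ξ) * (g (Λinv (Λ x - Λ ξ)) 0 + ∫ σ in (0:ℝ)..(Λ ξ),
        exp (β x ξ σ) * mu (Λinv (Λ x - Λ ξ + σ)) * g (Λinv (Λ x - Λ ξ + σ)) (Λinv σ)))
    {x ξ : ℝ} (hp : (x, ξ) ∈ Tri)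
    (hg : ∀ y η, (y, η) ∈ Tri → Λ y - Λ η ≤ Λ x - Λ ξ → 0 < g y η) : 0 < f x ξ := by
  obtain ⟨hξ0, hξx, hx1⟩ := Λ_bounds_of_mem_Tri hΛ.monotone hΛ0 hp
  have hΛinv0 : Λinv 0 = 0 := hΛ.injective (by rw [hinv 0 le_rfl, hΛ0])
  have hg0 : 0 < g (Λinv (Λ x - Λ ξ)) 0 := by
    have hq := mk_Λinv_mem_Tri hΛ hΛ0 hinv le_rfl (sub_nonneg.2 hξx) (by linarith)
    rw [hΛinv0] at hq
    exact hg _ _ hq (by rw [hinv _ (by linarith), hΛ0, sub_zero])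
  rw [hfrep x ξ hp]
  refine exp_mul_add_integral_pos hg0 hξ0 fun σ ⟨hσ0, hσξ⟩ => ?_
  have hq := mk_Λinv_mem_Tri hΛ hΛ0 hinv (s := σ) (t := Λ x - Λ ξ + σ)
    hσ0.le (by linarith) (by linarith)
  have hgq := hg _ _ hq (by rw [hinv _ (by linarith), hinv _ hσ0.le]; linarith)
  have hmuq := hmu _ ⟨hq.1.trans hq.2.1, hq.2.2⟩
  positivity

theorem pos_of_characteristic_representation (hΛ : StrictMono Λ) (hΛc : Continuous Λ)
    (hΛ0 : Λ 0 = 0) (hinv : ∀ t, 0 ≤ t → Λ (Λinv t) = t) {C : ℝ} (hC : 0 < C)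
    (hmu : ∀ x ∈ Icc (0:ℝ) 1, 0 < mu x)
    (hfc : ContinuousOn (Function.uncurry f) Tri) (hgc : ContinuousOn (Function.uncurry g) Tri)
    (αf : ℝ → ℝ → ℝ) (βf : ℝ → ℝ → ℝ → ℝ)
    (hfrep : ∀ x ξ : ℝ, (x, ξ) ∈ Tri →
      f x ξ = exp (αf x ξ) * (g (Λinv (Λ x - Λ ξ)) 0 + ∫ σ in (0:ℝ)..(Λ ξ),
        exp (βf x ξ σ) * mu (Λinv (Λ x - Λ ξ + σ)) * g (Λinv (Λ x - Λ ξ + σ)) (Λinv σ)))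
    (αg : ℝ → ℝ → ℝ) (βg : ℝ → ℝ → ℝ → ℝ)
    (hgrep : ∀ x ξ : ℝ, (x, ξ) ∈ Tri →
      g x ξ = exp (αg x ξ) * (C + ∫ σ in (0:ℝ)..((Λ x - Λ ξ) / 2),
        exp (βg x ξ σ) * mu (Λinv ((Λ x + Λ ξ) / 2 + σ)) *
          f (Λinv ((Λ x + Λ ξ) / 2 + σ)) (Λinv ((Λ x + Λ ξ) / 2 - σ)))) :
    ∀ x ξ : ℝ, (x, ξ) ∈ Tri → 0 < f x ξ ∧ 0 < g x ξ := by
  set Z := Tri ∩ Function.uncurry f ⁻¹' Iic 0 ∪ Tri ∩ Function.uncurry g ⁻¹' Iic 0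
  have hZ : IsCompact Z := isCompact_Tri.of_isClosed_subset
    ((hfc.preimage_isClosed_of_isClosed isCompact_Tri.isClosed isClosed_Iic).union
      (hgc.preimage_isClosed_of_isClosed isCompact_Tri.isClosed isClosed_Iic))
    (union_subset inter_subset_left inter_subset_left)
  have good_of_notMem : ∀ y η, (y, η) ∈ Tri → (y, η) ∉ Z → 0 < f y η ∧ 0 < g y η :=
    fun y η hq hZq => ⟨not_le.1 fun h => hZq (.inl ⟨hq, h⟩), not_le.1 fun h => hZq (.inr ⟨hq, h⟩)⟩
  by_contra! ⟨x, ξ, hp, hbad⟩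
  have hZne : Z.Nonempty := ⟨(x, ξ), by
    by_cases hf : 0 < f x ξ
    exacts [.inr ⟨hp, hbad hf⟩, .inl ⟨hp, not_lt.1 hf⟩]⟩
  obtain ⟨⟨x₀, ξ₀⟩, hp₀, hmin⟩ :=
    hZ.exists_isMinOn hZne (hΛc.comp continuous_fst |>.sub (hΛc.comp continuous_snd)).continuousOn
  have hT₀ : (x₀, ξ₀) ∈ Tri := by rcases hp₀ with h | h <;> exact h.1
  have below : ∀ y η, (y, η) ∈ Tri → Λ y - Λ η < Λ x₀ - Λ ξ₀ → 0 < f y η ∧ 0 < g y η :=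
    fun y η hq hlt => good_of_notMem y η hq fun hZq => (hmin hZq).not_gt hlt
  have hg : ∀ y η, (y, η) ∈ Tri → Λ y - Λ η ≤ Λ x₀ - Λ ξ₀ → 0 < g y η :=
    fun y η hq hle => g_pos_of_f_nonneg_below hΛ hΛ0 hinv hC hmu αg βg hgrep hq
      fun y' η' hq' hlt => (below y' η' hq' (hlt.trans_le hle)).1.le
  have hf := f_pos_of_g_pos hΛ hΛ0 hinv hmu αf βf hfrep hT₀ hg
  rcases hp₀ with ⟨-, h⟩ | ⟨-, h⟩
  · exact (not_lt.2 h) hf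
  · exact (not_lt.2 h) (hg x₀ ξ₀ hT₀ le_rfl)

end Characteristics

theorem stmt19_general (C₁ C₂ C : ℝ) (hC₁ : 0 < C₁) (hC₂ : 0 < C₂) (hC : 0 < C)
    (lam Λ Λinv mu : ℝ → ℝ)
    (hlam : ∀ x, lam x = C₁ * Real.exp (-C₂ * x))
    (hΛ : ∀ x, Λ x = ∫ s in (0:ℝ)..x, (lam s)⁻¹)
    (hΛinv : ∀ t, Λinv t = (1 / C₂) * Real.log (1 + C₁ * C₂ * t))
    (hmupos : ∀ x ∈ Set.Icc (0:ℝ) 1, 0 < mu x)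
    (f g : ℝ → ℝ → ℝ)
    (hfc : ContinuousOn (Function.uncurry f) Tri)
    (hgc : ContinuousOn (Function.uncurry g) Tri)
    (hfrep : ∀ x ξ : ℝ, (x, ξ) ∈ Tri →
      f x ξ = Real.exp (-(∫ σ in (0:ℝ)..(Λ ξ), deriv lam (Λinv σ))) *
        (g (Λinv (Λ x - Λ ξ)) 0
          + ∫ σ in (0:ℝ)..(Λ ξ),
              Real.exp (∫ τ in (0:ℝ)..σ, deriv lam (Λinv τ)) *
                mu (Λinv (Λ x - Λ ξ + σ)) *
                g (Λinv (Λ x - Λ ξ + σ)) (Λinv σ)))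
    (hgrep : ∀ x ξ : ℝ, (x, ξ) ∈ Tri →
      g x ξ = Real.exp (∫ σ in (0:ℝ)..((Λ x - Λ ξ) / 2),
          deriv lam (Λinv ((Λ x + Λ ξ) / 2 - σ))) *
        (C + ∫ σ in (0:ℝ)..((Λ x - Λ ξ) / 2),
            Real.exp (-(∫ τ in (0:ℝ)..σ, deriv lam (Λinv ((Λ x + Λ ξ) / 2 - τ)))) *
              mu (Λinv ((Λ x + Λ ξ) / 2 + σ)) *
              f (Λinv ((Λ x + Λ ξ) / 2 + σ)) (Λinv ((Λ x + Λ ξ) / 2 - σ)))) :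
    ∀ x ξ : ℝ, (x, ξ) ∈ Tri → 0 < f x ξ ∧ 0 < g x ξ := by
  have hCC : 0 < C₁ * C₂ := mul_pos hC₁ hC₂
  have hΛeq : Λ = fun x => (exp (C₂ * x) - 1) / (C₁ * C₂) := funext fun x => by
    simp only [hΛ, hlam, integral_inv_mul_exp_neg hC₁.ne' hC₂.ne']
  have hΛmono : StrictMono Λ := fun a b hab => by simp only [hΛeq]; gcongr
  have hinv : ∀ t, 0 ≤ t → Λ (Λinv t) = t := fun t ht => by
    have hpos : 0 < 1 + C₁ * C₂ * t := by positivity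
    rw [hΛeq, hΛinv]
    dsimp only
    rw [← mul_assoc, mul_one_div_cancel hC₂.ne', one_mul, exp_log hpos]
    field_simp
    ring
  exact pos_of_characteristic_representation hΛmono (hΛeq ▸ by fun_prop) (by simp [hΛeq]) hinv
    hC hmupos hfc hgc _ _ hfrep _ _ hgrep

theorem stmt19 (C₁ C₂ C : ℝ) (hC₁ : 0 < C₁) (hC₂ : 0 < C₂) (hC : 0 < C)
    (lam Λ Λinv mu : ℝ → ℝ)
    (hlam : ∀ x, lam x = C₁ * Real.exp (-C₂ * x))
    (hΛ : ∀ x, Λ x = ∫ s in (0:ℝ)..x, (lam s)⁻¹)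
    (hΛinv : ∀ t, Λinv t = (1 / C₂) * Real.log (1 + C₁ * C₂ * t))
    (hmu : ∀ x, mu x = -(deriv lam x) / 2) (hmupos : ∀ x ∈ Set.Icc (0:ℝ) 1, 0 < mu x)
    (f g : ℝ → ℝ → ℝ)
    (hfc : ContinuousOn (Function.uncurry f) Tri)
    (hgc : ContinuousOn (Function.uncurry g) Tri)
    (hgdiag : ∀ x ∈ Set.Icc (0:ℝ) 1, g x x = C)
    (hfrep : ∀ x ξ : ℝ, (x, ξ) ∈ Tri →
      f x ξ = Real.exp (-(∫ σ in (0:ℝ)..(Λ ξ), deriv lam (Λinv σ))) *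
        (g (Λinv (Λ x - Λ ξ)) 0
          + ∫ σ in (0:ℝ)..(Λ ξ),
              Real.exp (∫ τ in (0:ℝ)..σ, deriv lam (Λinv τ)) *
                mu (Λinv (Λ x - Λ ξ + σ)) *
                g (Λinv (Λ x - Λ ξ + σ)) (Λinv σ)))
    (hgrep : ∀ x ξ : ℝ, (x, ξ) ∈ Tri →
      g x ξ = Real.exp (∫ σ in (0:ℝ)..((Λ x - Λ ξ) / 2),
          deriv lam (Λinv ((Λ x + Λ ξ) / 2 - σ))) *
        (C + ∫ σ in (0:ℝ)..((Λ x - Λ ξ) / 2),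
            Real.exp (-(∫ τ in (0:ℝ)..σ, deriv lam (Λinv ((Λ x + Λ ξ) / 2 - τ)))) *
              mu (Λinv ((Λ x + Λ ξ) / 2 + σ)) *
              f (Λinv ((Λ x + Λ ξ) / 2 + σ)) (Λinv ((Λ x + Λ ξ) / 2 - σ)))) :
    ∀ x ξ : ℝ, (x, ξ) ∈ Tri → 0 < f x ξ ∧ 0 < g x ξ :=
  stmt19_general C₁ C₂ C hC₁ hC₂ hC lam Λ Λinv mu hlam hΛ hΛinv hmupos f g hfc hgc hfrep hgrep
end
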